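/- Let r ≥ 1 be a natural number, let p : Fin r → ℝ be a nonnegative vector with Σ_j p_j = 1, let d : Fin r → ℝ be nonnegative with Σ_j p_j · d_j > 0, let Δ > 0, let c > 0, and let q ∈ ℝ satisfy q > 1/(c + 1). Then for every index m ∈ Fin r, Σ_j p_j · ( d_j · ( q·(p_m + c·Δ) + (1 − q)·(p_m − Δ) ) + (1 − d_j)·p_m ) > p_m. -/
import Mathlib


/-- DPA strict submartingale criterion: if the estimate-accuracy probability `q`
exceeds `1/(c+1)`, then the one-step conditional expectation of `p m` strictly
exceeds `p m`. -/
theorem dpa_strict_submartingale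
    (r : ℕ) (hr : 1 ≤ r) (p d : Fin r → ℝ)
    (hp_nonneg : ∀ j, 0 ≤ p j) (hp : ∑ j, p j = 1)
    (hd_nonneg : ∀ j, 0 ≤ d j) (hpd : 0 < ∑ j, p j * d j)
    (Δ c q : ℝ) (hΔ : 0 < Δ) (hc : 0 < c) (hq : 1 / (c + 1) < q)
    (m : Fin r) :
    p m < ∑ j, p j * (d j * (q * (p m + c * Δ) + (1 - q) * (p m - Δ)) + (1 - d j) * p m) := by
  have hkey : ∀ j, p j * (d j * (q * (p m + c * Δ) + (1 - q) * (p m - Δ)) + (1 - d j) * p m)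
      = p j * p m + (p j * d j) * (Δ * (q * (c + 1) - 1)) := by
    intro j; ring
  rw [Finset.sum_congr rfl fun j _ => hkey j, Finset.sum_add_distrib,
    ← Finset.sum_mul, hp, ← Finset.sum_mul]
  have h1 : 0 < q * (c + 1) - 1 := by
    have hc1 : (0:ℝ) < c + 1 := by linarith
    have := (div_lt_iff₀ hc1).mp hq
    linarith
  have : 0 < (∑ j, p j * d j) * (Δ * (q * (c + 1) - 1)) :=
    mul_pos hpd (mul_pos hΔ h1)
  linarith
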